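/- The operator ¬ is a strong negation on (Ĩ, ≤_XY): it is order-reversing (α ≤_XY β implies ¬β ≤_XY ¬α), involutive, and swaps the bottom element ⟨0,1⟩ with the top element ⟨1,0⟩. -/
import Mathlib


/-- The set of intuitionistic fuzzy values Ĩ = {⟨μ,ν⟩ ∈ [0,1]² : μ + ν ≤ 1}. -/
def IFV : Set (ℝ × ℝ) :=
  {p | 0 ≤ p.1 ∧ p.1 ≤ 1 ∧ 0 ≤ p.2 ∧ p.2 ≤ 1 ∧ p.1 + p.2 ≤ 1}

/-- Score function s(α) = μ_α − ν_α. -/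
def sc (p : ℝ × ℝ) : ℝ := p.1 - p.2

/-- Accuracy function h(α) = μ_α + ν_α. -/
def ac (p : ℝ × ℝ) : ℝ := p.1 + p.2

/-- Strict Xu–Yager order. -/
def ltXY (a b : ℝ × ℝ) : Prop := sc a < sc b ∨ (sc a = sc b ∧ ac a < ac b)

/-- Nonstrict Xu–Yager order. -/
def leXY (a b : ℝ × ℝ) : Prop := sc a < sc b ∨ (sc a = sc b ∧ ac a ≤ ac b)

/-- The strong negation ¬α on IFVs. -/
noncomputable def negIFV (p : ℝ × ℝ) : ℝ × ℝ :=
  if p.2 < p.1 then ((1 - p.1 - p.2) / 2, (1 + p.1 - 3 * p.2) / 2)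
  else if p.1 = p.2 then (1 / 2 - p.1, 1 / 2 - p.2)
  else ((1 + p.2 - 3 * p.1) / 2, (1 - p.1 - p.2) / 2)

/-- ¬ is a strong negation on (Ĩ, ≤_XY): order-reversing, involutive, and it
swaps the bottom element ⟨0,1⟩ with the top element ⟨1,0⟩. -/
theorem negIFV_strong_negation :
    (∀ a ∈ IFV, ∀ b ∈ IFV, leXY a b → leXY (negIFV b) (negIFV a)) ∧
    (∀ a ∈ IFV, negIFV (negIFV a) = a) ∧
    negIFV ((0 : ℝ), (1 : ℝ)) = ((1 : ℝ), (0 : ℝ)) ∧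
    negIFV ((1 : ℝ), (0 : ℝ)) = ((0 : ℝ), (1 : ℝ)) := by
  refine ⟨?_, ?_, ?_, ?_⟩
  · rintro ⟨a1, a2⟩ _ ⟨b1, b2⟩ _ (h | ⟨h1, h2⟩)
    · left
      simp only [negIFV, sc] at *
      split_ifs <;> simp_all <;> linarith
    · right
      simp only [negIFV, sc, ac] at *
      split_ifs <;> simp_all <;> first | linarith | (constructor <;> linarith)
  · rintro ⟨a1, a2⟩ _
    simp only [negIFV]
    split_ifs <;> simp_all [Prod.ext_iff] <;>
      first | linarith | (constructor <;> linarith)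
  · simp [negIFV]
  · simp [negIFV]
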